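/- Let T_n = e·(n!)^(1/n) for integers n ≥ 1 and let σ_n = ⌊T_n⌋ − n + 1. If n ≥ 3 then 2 ≤ σ_n < n and the segment σ_{n−σ_n}, σ_{n−σ_n+1}, …, σ_n takes at most two values; equivalently, σ_n − σ_{n−σ_n} ≤ 1. -/

import Mathlib

/-!
Stirling's bounds `√(2πn) (n/e)ⁿ ≤ n! ≤ e √n (n/e)ⁿ` give, with `u = 1 + (log n)/2`,
`n + log(2πn)/2 ≤ T n ≤ n + u + u²/n`; in particular `σ n ≥ 2` for `n ≥ 1`.
For `4 ≤ n ≤ 15` the upper bound already forces `σ n ≤ 3` (and `σ 3 = 2` by direct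
computation), so the segment lies in `{2, 3}`.
For `n ≥ 16` it gives `σ n ≤ 12/5 + (log n)/2 ≤ n/3`, so `m = n - σ n` satisfies
`log m ≥ log n - 1/2`, and the lower bound at `m` yields `T m ≥ n - 2`, i.e. `σ m ≥ σ n - 1`.
-/

open Real Nat

noncomputable def T (n : ℕ) : ℝ := Real.exp 1 * (n ! : ℝ) ^ (1 / (n : ℝ))

noncomputable def σ (n : ℕ) : ℤ := ⌊T n⌋ - n + 1

lemma T_eq_exp (n : ℕ) : T n = exp (1 + Real.log n ! / n) := by
  rw [T, rpow_def_of_pos (by positivity), exp_add, mul_one_div]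

lemma T_pow {n : ℕ} (hn : n ≠ 0) : T n ^ n = exp 1 ^ n * n ! := by
  rw [T, mul_pow, one_div, rpow_inv_natCast_pow (by positivity) hn]

lemma log_factorial_le {n : ℕ} (hn : n ≠ 0) :
    Real.log n ! ≤ n * Real.log n - n + Real.log n / 2 + 1 := by
  have hs : Real.log (Stirling.stirlingSeq n) ≤ Real.log (Stirling.stirlingSeq 1) := by
    obtain ⟨k, rfl⟩ := exists_eq_succ_of_ne_zero hn
    exact Stirling.log_stirlingSeq'_antitone (Nat.zero_le k)
  have hn0 : (0 : ℝ) < n := by positivity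
  rw [Stirling.log_stirlingSeq_formula, Stirling.stirlingSeq_one,
    log_div (exp_pos 1).ne' (by positivity), log_sqrt zero_le_two, log_mul two_ne_zero hn0.ne',
    log_div hn0.ne' (exp_pos 1).ne', log_exp] at hs
  linarith

lemma add_log_two_pi_mul_div_two_le_T {n : ℕ} (hn : n ≠ 0) :
    n + Real.log (2 * π * n) / 2 ≤ T n := by
  have hn0 : (0 : ℝ) < n := by positivity
  have hlog : Real.log n + Real.log (2 * π * n) / (2 * n) ≤ 1 + Real.log n ! / n := by
    have := Stirling.le_log_factorial_stirling hn
    rw [log_mul (by positivity) hn0.ne']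
    field_simp
    linarith
  calc (n : ℝ) + Real.log (2 * π * n) / 2 = n * (Real.log (2 * π * n) / (2 * n) + 1) := by
        field_simp; ring
    _ ≤ exp (Real.log n) * exp (Real.log (2 * π * n) / (2 * n)) := by
        rw [exp_log hn0]; gcongr; exact add_one_le_exp _
    _ ≤ T n := by rw [T_eq_exp, ← exp_add]; gcongr

lemma T_le_mul_exp {n : ℕ} (hn : n ≠ 0) : T n ≤ n * exp ((1 + Real.log n / 2) / n) := by
  have hn0 : (0 : ℝ) < n := by positivity
  have hlog : 1 + Real.log n ! / n ≤ Real.log n + (1 + Real.log n / 2) / n := by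
    have := log_factorial_le hn
    field_simp
    linarith
  calc T n ≤ exp (Real.log n + (1 + Real.log n / 2) / n) := by rw [T_eq_exp]; gcongr
    _ = n * exp ((1 + Real.log n / 2) / n) := by rw [exp_add, exp_log hn0]

lemma T_le_add {n : ℕ} (hn : n ≠ 0) (hu : 1 + Real.log n / 2 ≤ n) :
    T n ≤ n + (1 + Real.log n / 2) + (1 + Real.log n / 2) ^ 2 / n := by
  have hn0 : (0 : ℝ) < n := by positivity
  have hu0 : 0 ≤ 1 + Real.log n / 2 := by linarith [Real.log_natCast_nonneg n]
  have hx : |(1 + Real.log n / 2) / n| ≤ 1 := by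
    rw [abs_of_nonneg (by positivity), div_le_one hn0]; exact hu
  have hexp := (abs_le.mp (abs_exp_sub_one_sub_id_le hx)).2
  calc T n ≤ n * exp ((1 + Real.log n / 2) / n) := T_le_mul_exp hn
    _ ≤ n * (1 + (1 + Real.log n / 2) / n + ((1 + Real.log n / 2) / n) ^ 2) := by
        gcongr; linarith
    _ = _ := by field_simp

lemma exp_one_mul_log_le_two_mul_sqrt {x : ℝ} (hx : 0 ≤ x) : exp 1 * Real.log x ≤ 2 * √x := by
  rcases hx.eq_or_lt with rfl | hx
  · simp
  have := exp_one_mul_le_exp (x := Real.log √x)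
  rw [exp_log (sqrt_pos.mpr hx), log_sqrt hx.le] at this
  linarith

lemma σ_le_of_T_lt {n : ℕ} {s : ℤ} (h : T n < n + s) : σ n ≤ s := by
  have : ⌊T n⌋ < n + s := Int.floor_lt.mpr (by push_cast; exact h)
  rw [σ]; omega

lemma le_σ_of_le_T {n : ℕ} {s : ℤ} (h : n + s - 1 ≤ T n) : s ≤ σ n := by
  have : n + s - 1 ≤ ⌊T n⌋ := Int.le_floor.mpr (by push_cast; exact h)
  rw [σ]; omega

lemma σ_le_two_add_log_div_two_add {n : ℕ} (hn : n ≠ 0) (hu : 1 + Real.log n / 2 ≤ n) :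
    (σ n : ℝ) ≤ 2 + Real.log n / 2 + (1 + Real.log n / 2) ^ 2 / n := by
  have := T_le_add hn hu
  have := Int.floor_le (T n)
  rw [σ]; push_cast; linarith

lemma two_le_σ {n : ℕ} (hn : n ≠ 0) : 2 ≤ σ n := by
  apply le_σ_of_le_T
  push_cast
  rcases (by omega : n = 1 ∨ 2 ≤ n) with rfl | hn2
  · rw [T_eq_exp]; norm_num; linarith [exp_one_gt_d9]
  · have hlog : 2 ≤ Real.log (2 * π * n) := by
      rw [le_log_iff_exp_le (by positivity), show (2 : ℝ) = 1 + 1 by norm_num, exp_add]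
      have : (2 : ℝ) ≤ n := by exact_mod_cast hn2
      nlinarith [exp_one_lt_three, pi_gt_three, exp_pos 1]
    linarith [add_log_two_pi_mul_div_two_le_T hn]

lemma σ_three : σ 3 = 2 := by
  refine le_antisymm (σ_le_of_T_lt ?_) (two_le_σ three_ne_zero)
  have hT : T 3 ^ 3 < 5 ^ 3 :=
    calc T 3 ^ 3 = exp 1 ^ 3 * 6 := by rw [T_pow three_ne_zero]; norm_num [Nat.factorial]
      _ < 2.72 ^ 3 * 6 := by gcongr; linarith [exp_one_lt_d9]
      _ < 5 ^ 3 := by norm_num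
  have := lt_of_pow_lt_pow_left₀ 3 (by norm_num) hT
  push_cast; linarith

lemma σ_le_three {n : ℕ} (h4 : 4 ≤ n) (h15 : n ≤ 15) : σ n ≤ 3 := by
  have hn : n ≠ 0 := by omega
  have hrn : √(n : ℝ) ^ 2 = n := sq_sqrt (Nat.cast_nonneg n)
  have hr : 2 ≤ √(n : ℝ) := le_sqrt_of_sq_le (by norm_num; exact_mod_cast h4)
  have hr15 : √(n : ℝ) ^ 2 ≤ 15 := by rw [hrn]; exact_mod_cast h15
  have hlog : 2.7 * Real.log n ≤ 2 * √(n : ℝ) := by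
    nlinarith [exp_one_mul_log_le_two_mul_sqrt (Nat.cast_nonneg (α := ℝ) n), exp_one_gt_d9,
      Real.log_natCast_nonneg n]
  have hu : 1 + Real.log n / 2 ≤ n := by nlinarith
  have hsum : (1 + Real.log n / 2) + (1 + Real.log n / 2) ^ 2 / n < 3 := by
    have hL := Real.log_natCast_nonneg n
    generalize Real.log n = L at hL hlog ⊢
    have hr' : √(n : ℝ) ≤ 3.9 := by nlinarith
    rw [← hrn, ← lt_sub_iff_add_lt', div_lt_iff₀ (by positivity)]
    -- with `L` at its bound the claim is a cubic in `√n`, concave on `[2, 3.9]`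
    nlinarith [mul_nonneg (mul_nonneg (sub_nonneg.2 hr) (sub_nonneg.2 hr')) (sqrt_nonneg (n : ℝ)),
      mul_nonneg (sub_nonneg.2 hlog) (add_nonneg hL (sqrt_nonneg (n : ℝ)))]
  apply σ_le_of_T_lt
  push_cast
  linarith [T_le_add hn hu]

lemma σ_sub_σ_le_one_of_σ_le_three {n : ℕ} (hn : n ≠ 0) (h3 : σ n ≤ 3) (hlt : σ n < n) :
    σ n - σ (n - (σ n).toNat) ≤ 1 := by
  have := two_le_σ hn
  have : 2 ≤ σ (n - (σ n).toNat) := two_le_σ (by omega)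
  omega

lemma one_add_log_div_two_sq_le {n : ℕ} (h16 : 16 ≤ n) :
    (1 + Real.log n / 2) ^ 2 ≤ 2 * n / 5 := by
  have hrn : √(n : ℝ) ^ 2 = n := sq_sqrt (Nat.cast_nonneg n)
  have hr : 4 ≤ √(n : ℝ) := le_sqrt_of_sq_le (by norm_num; exact_mod_cast h16)
  have hlog : 2.7 * Real.log n ≤ 2 * √(n : ℝ) := by
    nlinarith [exp_one_mul_log_le_two_mul_sqrt (Nat.cast_nonneg (α := ℝ) n), exp_one_gt_d9,
      Real.log_natCast_nonneg n]
  have hL := Real.log_natCast_nonneg n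
  generalize Real.log n = L at hL hlog ⊢
  rw [← hrn]
  nlinarith

lemma σ_le_of_sixteen_le {n : ℕ} (h16 : 16 ≤ n) : (σ n : ℝ) ≤ 12 / 5 + Real.log n / 2 := by
  have hsq := one_add_log_div_two_sq_le h16
  have hn : (16 : ℝ) ≤ n := by exact_mod_cast h16
  have hu : 1 + Real.log n / 2 ≤ n := by nlinarith
  have : (1 + Real.log n / 2) ^ 2 / n ≤ 2 / 5 := by rw [div_le_iff₀ (by positivity)]; linarith
  linarith [σ_le_two_add_log_div_two_add (by omega) hu]

lemma three_mul_σ_le {n : ℕ} (h16 : 16 ≤ n) : 3 * σ n ≤ n := by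
  have hσ := σ_le_of_sixteen_le h16
  have hsq := one_add_log_div_two_sq_le h16
  have hn : (16 : ℝ) ≤ n := by exact_mod_cast h16
  have hL := Real.log_natCast_nonneg n
  have : (3 * σ n : ℝ) ≤ n := by nlinarith
  exact_mod_cast this

lemma σ_sub_σ_le_one_of_le_T {n m : ℕ} (hm : (m : ℤ) = n - σ n) (h : (n : ℝ) - 2 ≤ T m) :
    σ n - σ m ≤ 1 := by
  have : (n : ℤ) - m - 1 ≤ σ m := le_σ_of_le_T (by push_cast; linarith)
  omega

lemma sub_two_le_T_sub_σ {n : ℕ} (h16 : 16 ≤ n) : (n : ℝ) - 2 ≤ T (n - (σ n).toNat) := by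
  have h2 := two_le_σ (n := n) (by omega)
  have h3 := three_mul_σ_le h16
  have hmz : ((n - (σ n).toNat : ℕ) : ℤ) = n - σ n := by omega
  set m := n - (σ n).toNat
  have hm : (m : ℝ) = n - σ n := by exact_mod_cast hmz
  have hσ2 : (2 : ℝ) ≤ σ n := by exact_mod_cast h2
  have hσ3 : (3 * σ n : ℝ) ≤ n := by exact_mod_cast h3
  have hm0 : (0 : ℝ) < m := by rw [hm]; linarith
  have hratio : Real.log n - Real.log m ≤ 1 / 2 := by
    rw [← log_div (by positivity) hm0.ne']
    calc Real.log (n / m) ≤ n / m - 1 := log_le_sub_one_of_pos (by positivity)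
      _ ≤ 1 / 2 := by rw [div_sub_one hm0.ne', div_le_iff₀ hm0, hm]; linarith
  have hpi : 1 ≤ Real.log π := by
    rw [le_log_iff_exp_le pi_pos]; linarith [exp_one_lt_three, pi_gt_three]
  have hT := add_log_two_pi_mul_div_two_le_T (n := m) (by exact_mod_cast hm0.ne')
  rw [log_mul (by positivity) hm0.ne', log_mul two_ne_zero pi_ne_zero] at hT
  linarith [σ_le_of_sixteen_le h16, log_two_gt_d9]

/-- Corollary 4: for `T_n = e·(n!)^(1/n)` and `n ≥ 3` one has `2 ≤ σ_n < n` and the segment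
`σ_{n−σ_n}, …, σ_n` takes at most two values, i.e. `σ_n − σ_{n−σ_n} ≤ 1`. -/
theorem sigma_segment_two_values_factorial (n : ℕ) (hn : 3 ≤ n) :
    2 ≤ σ n ∧ σ n < (n : ℤ) ∧ σ n - σ (n - (σ n).toNat) ≤ 1 := by
  have h2 : 2 ≤ σ n := two_le_σ (by omega)
  rcases le_or_gt n 15 with h15 | h16
  · have hσ : σ n ≤ 3 ∧ σ n < n := by
      rcases hn.eq_or_lt with rfl | h4
      · simp [σ_three]
      · have := σ_le_three h4 h15; omega
    exact ⟨h2, hσ.2, σ_sub_σ_le_one_of_σ_le_three (by omega) hσ.1 hσ.2⟩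
  · have h3 := three_mul_σ_le h16
    exact ⟨h2, by omega, σ_sub_σ_le_one_of_le_T (by omega) (sub_two_le_T_sub_σ h16)⟩
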